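/- arXiv:math/0304062 — 2 statements merged into one kernel-verified Lean document; each statement's English description precedes it below -/
import Mathlib

section
/- For all n, (8·T_n)² = 2·(L_{2n} - 2), where T_0 = 0, T_1 = 1, T_n = 6T_{n-1} - T_{n-2} and L_0 = 2, L_1 = 6, L_n = 6L_{n-1} - L_{n-2}. -/
def T : ℕ → ℤ
  | 0 => 0
  | 1 => 1
  | (n+2) => 6 * T (n+1) - T n

def L : ℕ → ℤ
  | 0 => 2
  | 1 => 6
  | (n+2) => 6 * L (n+1) - L n

lemma cassini (n : ℕ) : T (n+1)^2 + T n^2 - 6 * T n * T (n+1) = 1 := by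
  induction n with
  | zero => simp [T]
  | succ k ih =>
    have h : T (k+2) = 6 * T (k+1) - T k := rfl
    rw [h]; ring_nf; ring_nf at ih; linarith

lemma key (n : ℕ) : L (2*n) = 32 * T n ^ 2 + 2 ∧ L (2*n+1) = 32 * T n * T (n+1) + 6 := by
  induction n with
  | zero => simp [L, T]
  | succ k ih =>
    obtain ⟨h1, h2⟩ := ih
    have hT : T (k+2) = 6 * T (k+1) - T k := rfl
    have hL1 : L (2*k+2) = 6 * L (2*k+1) - L (2*k) := rfl
    have hL2 : L (2*k+3) = 6 * L (2*k+2) - L (2*k+1) := rfl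
    have hc := cassini k
    constructor
    · have : 2*(k+1) = 2*k+2 := by ring
      rw [this, hL1, h1, h2]; nlinarith [hc, hT]
    · have : 2*(k+1)+1 = 2*k+3 := by ring
      rw [this, hL2, hL1, h1, h2, hT]; nlinarith [hc]

theorem stmt7 (n : ℕ) : (8 * T n)^2 = 2 * (L (2*n) - 2) := by
  have := (key n).1
  rw [this]; ring
end

section
/- For all n ≥ 1, (T_{2n} - 1)·C_n = T_{2n+1}·C_{n-1}, and both equal (B_{3n} - B_{n+1})/2, where T_0 = 0, T_1 = 1, T_n = 6T_{n-1} - T_{n-2}; C_0 = 2, C_1 = 14, C_n = 6C_{n-1} - C_{n-2}; B_0 = 1, B_1 = 5, B_n = 6B_{n-1} - B_{n-2}. -/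
def C : ℕ → ℤ
  | 0 => 2
  | 1 => 14
  | (n+2) => 6 * C (n+1) - C n

def B : ℕ → ℤ
  | 0 => 1
  | 1 => 5
  | (n+2) => 6 * B (n+1) - B n

lemma Trec (n : ℕ) : T (n+2) = 6 * T (n+1) - T n := rfl
lemma Crec (n : ℕ) : C (n+2) = 6 * C (n+1) - C n := rfl
lemma Brec (n : ℕ) : B (n+2) = 6 * B (n+1) - B n := rfl

lemma pair_ind {p : ℕ → Prop} (h0 : p 0) (h1 : p 1)
    (hs : ∀ n, p n → p (n+1) → p (n+2)) : ∀ n, p n := by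
  have key : ∀ n, p n ∧ p (n+1) := by
    intro n
    induction n with
    | zero => exact ⟨h0, h1⟩
    | succ k ih => exact ⟨ih.2, hs k ih.1 ih.2⟩
  exact fun n => (key n).1

lemma Tinv : ∀ n, T (n+1)^2 - 6 * T n * T (n+1) + T n ^ 2 = 1 := by
  intro n
  induction n with
  | zero => simp [T]
  | succ k ih =>
    rw [Trec]
    ring_nf
    ring_nf at ih
    linarith

lemma CT : ∀ n, C n = 2 * (T (n+1) + T n) := by
  apply pair_ind
  · simp [C, T]
  · simp [C, T]
  · intro n h1 h2
    rw [Crec, Trec n, Trec (n+1), h1, h2, Trec n]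
    ring

lemma BT : ∀ n, B n = T (n+1) - T n := by
  apply pair_ind
  · simp [B, T]
  · simp [B, T]
  · intro n h1 h2
    rw [Brec, Trec n, Trec (n+1), h1, h2, Trec n]
    ring

lemma T2 : ∀ n, T (2*n) = T n * (2 * T (n+1) - 6 * T n) ∧
    T (2*n+1) = T (n+1)^2 - T n ^2 := by
  intro n
  induction n with
  | zero => simp [T]
  | succ k ih =>
    obtain ⟨h1, h2⟩ := ih
    have a2 : T (2*k+2) = 6 * T (2*k+1) - T (2*k) := Trec (2*k)
    have a3 : T (2*k+3) = 6 * T (2*k+2) - T (2*k+1) := Trec (2*k+1)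
    have b : T (k+2) = 6 * T (k+1) - T k := Trec k
    rw [show 2*(k+1)+1 = 2*k+3 from by ring, show 2*(k+1) = 2*k+2 from by ring,
      show k+1+1 = k+2 from rfl, a3, a2, b, h1, h2]
    constructor <;> ring

lemma T3 : ∀ n, T (3*n) = -T n + 4 * T n * T (n+1)^2 - 24 * T n ^2 * T (n+1) + 36 * T n ^3 ∧
    T (3*n+1) = -3 * T (n+1) + 4 * T (n+1)^3 + 6 * T n - 24 * T n * T (n+1)^2 + 36 * T n^2 * T (n+1) := by
  intro n
  induction n with
  | zero => simp [T]
  | succ k ih =>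
    obtain ⟨h1, h2⟩ := ih
    have inv := Tinv k
    have a2 : T (3*k+2) = 6 * T (3*k+1) - T (3*k) := Trec (3*k)
    have a3 : T (3*k+3) = 6 * T (3*k+2) - T (3*k+1) := Trec (3*k+1)
    have a4 : T (3*k+4) = 6 * T (3*k+3) - T (3*k+2) := Trec (3*k+2)
    have b : T (k+2) = 6 * T (k+1) - T k := Trec k
    rw [show 3*(k+1)+1 = 3*k+4 from by ring, show 3*(k+1) = 3*k+3 from by ring,
      show k+1+1 = k+2 from rfl, a4, a3, a2, b, h1, h2]
    constructor
    · linear_combination (104 * T (k+1) - 216 * T k) * inv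
    · linear_combination (600 * T (k+1) - 1256 * T k) * inv

theorem stmt17 (n : ℕ) (hn : 1 ≤ n) :
    (T (2*n) - 1) * C n = T (2*n+1) * C (n-1) ∧
    2 * ((T (2*n) - 1) * C n) = B (3*n) - B (n+1) := by
  obtain ⟨m, rfl⟩ : ∃ m, n = m + 1 := ⟨n - 1, (Nat.succ_pred_eq_of_pos hn).symm⟩
  simp only [Nat.add_sub_cancel]
  set t := T (m+1) with ht
  set u := T (m+2) with hu
  have inv := Tinv (m+1)
  obtain ⟨h20, h21⟩ := T2 (m+1)
  obtain ⟨h30, h31⟩ := T3 (m+1)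
  have hC1 : C (m+1) = 2 * (u + t) := CT (m+1)
  have hCm : C m = 2 * (t + T m) := CT m
  have hTm : T m = 6 * t - u := by
    have := Trec m; rw [← ht, ← hu] at this; linarith
  have hB3 : B (3*(m+1)) = T (3*(m+1)+1) - T (3*(m+1)) := BT _
  have hB1 : B (m+1+1) = T (m+1+2) - T (m+1+1) := BT _
  have hT3u : T (m+1+2) = 6 * u - t := by
    rw [Trec (m+1)]
  rw [hC1, hCm, hTm, hB3, hB1, hT3u, h20, h21, h30, h31]
  rw [← ht, ← hu] at *
  constructor
  · linear_combination (2 * u + 2 * t) * inv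
  · linear_combination (-4 * u + 12 * t) * inv
end
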